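/- Let n ≥ 1, A ∈ ℂ^{n×n}, and r ∈ ℝ. Then the v-projected Davis–Wielandt shell W_{≥r}(A) := { ⟨x, A x⟩ : x ∈ ℂⁿ, ‖x‖ = 1, ‖A x‖ ≥ r } is a compact and convex subset of ℂ. -/

import Mathlib

/-!
Restricted to the plane spanned by two unit vectors `x, y`, unit vectors up to phase are
parametrized by the Bloch sphere `S² ⊂ ℝ³`, and both `z ↦ ⟪z, A z⟫ ∈ ℂ ≅ ℝ²` and
`z ↦ ‖A z‖²` become affine functions of the Bloch vector. A convex combination of the Bloch
vectors of `x` and `y` lies in the unit ball; moving from it along the kernel of the linear part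
of the first map (nontrivial, as `3 > 2`), in the direction in which the second does not decrease,
we reach the sphere. This gives a unit vector with the prescribed value of `⟪z, A z⟫` and with
`‖A z‖²` at least the corresponding convex combination of `‖A x‖²` and `‖A y‖²`.
Compactness holds because the shell is a continuous image of a closed subset of the unit sphere.
-/

open scoped ComplexOrder Matrix

noncomputable section

/-- The vertically projected Davis–Wielandt shell `W_{≥r}(A)`. -/
def wShell {n : ℕ} (A : Matrix (Fin n) (Fin n) ℂ) (r : ℝ) : Set ℂ :=
  { z | ∃ x : EuclideanSpace ℂ (Fin n), ‖x‖ = 1 ∧ r ≤ ‖Matrix.toEuclideanLin A x‖ ∧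
      z = (inner ℂ x (Matrix.toEuclideanLin A x) : ℂ) }

open Complex ComplexConjugate

theorem exists_norm_eq_one_map_eq_le {V W : Type*} [NormedAddCommGroup V] [NormedSpace ℝ V]
    [AddCommGroup W] [Module ℝ W] {L : V →ₗ[ℝ] W} (hL : LinearMap.ker L ≠ ⊥) (f : V →ₗ[ℝ] ℝ)
    {m : V} (hm : ‖m‖ ≤ 1) : ∃ v : V, ‖v‖ = 1 ∧ L v = L m ∧ f m ≤ f v := by
  obtain ⟨w, hwL, hw0, hfw⟩ : ∃ w ∈ LinearMap.ker L, w ≠ 0 ∧ 0 ≤ f w := by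
    obtain ⟨w, hwL, hw0⟩ := (Submodule.ne_bot_iff _).mp hL
    rcases le_total 0 (f w) with h | h
    · exact ⟨w, hwL, hw0, h⟩
    · exact ⟨-w, neg_mem hwL, neg_ne_zero.mpr hw0, by simpa using h⟩
  have hw : 0 < ‖w‖ := norm_pos_iff.mpr hw0
  set τ := (1 + ‖m‖) / ‖w‖
  have hτ : 0 ≤ τ := by positivity
  have hfar : 1 ≤ ‖m + τ • w‖ := by
    have : ‖τ • w‖ = 1 + ‖m‖ := by
      rw [norm_smul, Real.norm_of_nonneg hτ, div_mul_cancel₀ _ hw.ne']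
    have := norm_sub_norm_le (τ • w) (-m)
    rw [sub_neg_eq_add, add_comm, norm_neg] at this
    linarith
  obtain ⟨t, ht, hnorm⟩ := intermediate_value_Icc hτ (f := fun t : ℝ => ‖m + t • w‖)
    (by fun_prop) ⟨by simpa using hm, hfar⟩
  refine ⟨m + t • w, hnorm, by simp [LinearMap.mem_ker.mp hwL], ?_⟩
  simpa using mul_nonneg ht.1 hfw

def bloch (α β : ℂ) : EuclideanSpace ℝ (Fin 3) :=
  !₂[2 * (conj α * β).re, 2 * (conj α * β).im, ‖α‖ ^ 2 - ‖β‖ ^ 2]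

theorem norm_bloch (α β : ℂ) : ‖bloch α β‖ = ‖α‖ ^ 2 + ‖β‖ ^ 2 := by
  have hre_im : (conj α * β).re ^ 2 + (conj α * β).im ^ 2 = ‖α‖ ^ 2 * ‖β‖ ^ 2 := by
    rw [← mul_pow, ← norm_conj α, ← norm_mul, Complex.sq_norm, normSq_apply]; ring
  rw [EuclideanSpace.norm_eq, Real.sqrt_eq_iff_mul_self_eq (by positivity) (by positivity)]
  simp only [bloch, Fin.sum_univ_three, Real.norm_eq_abs, sq_abs, Matrix.cons_val_zero,
    Matrix.cons_val_one, Matrix.cons_val_two, Matrix.head_cons, Matrix.tail_cons]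
  linear_combination 4 * hre_im

theorem exists_bloch_eq {v : EuclideanSpace ℝ (Fin 3)} (hv : ‖v‖ = 1) :
    ∃ α β : ℂ, ‖α‖ ^ 2 + ‖β‖ ^ 2 = 1 ∧ bloch α β = v := by
  have hsum : v 0 ^ 2 + v 1 ^ 2 + v 2 ^ 2 = 1 := by
    rw [EuclideanSpace.norm_eq, Real.sqrt_eq_one, Fin.sum_univ_three] at hv
    simpa using hv
  by_cases h2 : v 2 = -1
  · have h0 : v 0 = 0 := by nlinarith
    have h1 : v 1 = 0 := by nlinarith
    refine ⟨0, 1, by simp, ?_⟩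
    ext i; fin_cases i <;> simp [bloch, h0, h1, h2]
  · have hpos : 0 < (1 + v 2) / 2 := by
      have : -1 < v 2 := lt_of_le_of_ne (by nlinarith) (Ne.symm h2)
      linarith
    set a := Real.sqrt ((1 + v 2) / 2)
    have ha2 : a ^ 2 = (1 + v 2) / 2 := Real.sq_sqrt hpos.le
    have ha : 0 < a := Real.sqrt_pos.mpr hpos
    refine ⟨a, ⟨v 0 / (2 * a), v 1 / (2 * a)⟩, ?_, ?_⟩
    · rw [Complex.norm_real, Real.norm_of_nonneg ha.le, Complex.sq_norm, normSq_mk]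
      field_simp
      nlinarith
    · ext i; fin_cases i
      · simp [bloch]; field_simp
      · simp [bloch]; field_simp
      · simp [bloch, Complex.sq_norm, normSq_mk, Real.norm_of_nonneg ha.le]
        field_simp
        nlinarith

section Sesquilinear

variable {E : Type*} [AddCommGroup E] [Module ℂ E]

def blochMap (B : E →ₗ⋆[ℂ] E →ₗ[ℂ] ℂ) (x e : E) : EuclideanSpace ℝ (Fin 3) →ₗ[ℝ] ℂ :=
  Fintype.linearCombination ℝ
      ![(B x e + B e x) / 2, I * (B x e - B e x) / 2, (B x x - B e e) / 2] ∘ₗ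
    (WithLp.linearEquiv 2 ℝ (Fin 3 → ℝ)).toLinearMap

theorem blochMap_apply (B : E →ₗ⋆[ℂ] E →ₗ[ℂ] ℂ) (x e : E) (v : EuclideanSpace ℝ (Fin 3)) :
    blochMap B x e v = v 0 * ((B x e + B e x) / 2) + v 1 * (I * (B x e - B e x) / 2)
      + v 2 * ((B x x - B e e) / 2) := by
  simp [blochMap, Fintype.linearCombination_apply, Fin.sum_univ_three, Complex.real_smul]

theorem sesq_smul_add_smul_self (B : E →ₗ⋆[ℂ] E →ₗ[ℂ] ℂ) (x e : E) {α β : ℂ}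
    (h : ‖α‖ ^ 2 + ‖β‖ ^ 2 = 1) :
    B (α • x + β • e) (α • x + β • e) = (B x x + B e e) / 2 + blochMap B x e (bloch α β) := by
  have hα := conj_mul' α
  have hβ := conj_mul' β
  have hγ := (re_add_im (conj α * β)).symm
  have hγ' : conj β * α = (conj α * β).re - (conj α * β).im * I := by
    simpa [mul_comm, sub_eq_add_neg] using congrArg conj hγ
  have h' : (‖α‖ : ℂ) ^ 2 + (‖β‖ : ℂ) ^ 2 = 1 := by exact_mod_cast h
  simp only [blochMap_apply, bloch, map_add, map_smulₛₗ, LinearMap.add_apply,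
    LinearMap.smul_apply, smul_eq_mul, RingHom.id_apply, Matrix.cons_val_zero,
    Matrix.cons_val_one, Matrix.cons_val_two, Matrix.head_cons, Matrix.tail_cons]
  push_cast
  linear_combination B x e * hγ + B e x * hγ' + B x x * hα + B e e * hβ + (B x x + B e e) / 2 * h'

theorem exists_sesq_eq_combo_le (B₁ B₂ : E →ₗ⋆[ℂ] E →ₗ[ℂ] ℂ) (x e : E) {c₁ c₂ : ℂ}
    (hc : ‖c₁‖ ^ 2 + ‖c₂‖ ^ 2 = 1) {a b : ℝ} (ha : 0 ≤ a) (hb : 0 ≤ b) (hab : a + b = 1) :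
    ∃ α β : ℂ, ‖α‖ ^ 2 + ‖β‖ ^ 2 = 1 ∧
      B₁ (α • x + β • e) (α • x + β • e) =
        a • B₁ x x + b • B₁ (c₁ • x + c₂ • e) (c₁ • x + c₂ • e) ∧
      a * (B₂ x x).re + b * (B₂ (c₁ • x + c₂ • e) (c₁ • x + c₂ • e)).re ≤
        (B₂ (α • x + β • e) (α • x + β • e)).re := by
  have hx (B : E →ₗ⋆[ℂ] E →ₗ[ℂ] ℂ) :
      B x x = (B x x + B e e) / 2 + blochMap B x e (bloch 1 0) := by
    simpa using sesq_smul_add_smul_self B x e (α := 1) (β := 0) (by simp)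
  have hab' : (a : ℂ) + b = 1 := by exact_mod_cast hab
  set m := a • bloch 1 0 + b • bloch c₁ c₂
  have hm : ‖m‖ ≤ 1 := by
    calc ‖m‖ ≤ a * ‖bloch 1 0‖ + b * ‖bloch c₁ c₂‖ := by
          refine (norm_add_le _ _).trans ?_
          rw [norm_smul, norm_smul, Real.norm_of_nonneg ha, Real.norm_of_nonneg hb]
      _ = 1 := by rw [norm_bloch, norm_bloch, hc]; simp [hab]
  -- the Bloch map of `B₁` goes from `ℝ³` to `ℂ ≅ ℝ²`, so it has a kernel
  have hker : LinearMap.ker (blochMap B₁ x e) ≠ ⊥ :=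
    LinearMap.ker_ne_bot_of_finrank_lt (by simp)
  obtain ⟨v, hv, hLv, hfv⟩ :=
    exists_norm_eq_one_map_eq_le hker (reLm ∘ₗ blochMap B₂ x e) hm
  obtain ⟨α, β, hαβ, rfl⟩ := exists_bloch_eq hv
  refine ⟨α, β, hαβ, ?_, ?_⟩
  · rw [sesq_smul_add_smul_self B₁ x e hαβ, sesq_smul_add_smul_self B₁ x e hc, hLv]
    simp only [m, map_add, map_smul, Complex.real_smul]
    linear_combination (-(a : ℂ)) * hx B₁ - (B₁ x x + B₁ e e) / 2 * hab'
  · have hxre := congrArg re (hx B₂)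
    rw [sesq_smul_add_smul_self B₂ x e hαβ, sesq_smul_add_smul_self B₂ x e hc]
    simp only [m, map_add, map_smul, LinearMap.comp_apply, reLm_coe, smul_eq_mul, add_re]
      at hfv hxre ⊢
    linear_combination hfv + a * hxre + ((B₂ x x + B₂ e e) / 2).re * hab

end Sesquilinear

section InnerProductSpace

variable {E F : Type*} [NormedAddCommGroup E] [InnerProductSpace ℂ E]
  [NormedAddCommGroup F] [InnerProductSpace ℂ F]

def projDWShell (S : E →ₗ[ℂ] E) (T : E →ₗ[ℂ] F) (r : ℝ) : Set ℂ :=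
  {z | ∃ x : E, ‖x‖ = 1 ∧ r ≤ ‖T x‖ ∧ z = inner ℂ x (S x)}

theorem norm_smul_add_smul_sq {x e : E} (hx : ‖x‖ = 1) (he : ‖e‖ = 1) (hxe : inner ℂ x e = 0)
    (α β : ℂ) : ‖α • x + β • e‖ ^ 2 = ‖α‖ ^ 2 + ‖β‖ ^ 2 := by
  have h : inner ℂ (α • x) (β • e) = 0 := by simp [hxe]
  rw [sq, norm_add_sq_eq_norm_sq_add_norm_sq_of_inner_eq_zero _ _ h]
  simp [norm_smul, hx, he, sq]

theorem exists_eq_inner_smul_add_smul {x : E} (hx : ‖x‖ = 1) {y : E}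
    (hy : y ≠ inner ℂ x y • x) :
    ∃ e : E, ‖e‖ = 1 ∧ inner ℂ x e = 0 ∧ ∃ c : ℂ, y = inner ℂ x y • x + c • e := by
  set y' := y - inner ℂ x y • x
  have hy' : ‖y'‖ ≠ 0 := norm_ne_zero_iff.mpr (sub_ne_zero.mpr hy)
  refine ⟨(‖y'‖⁻¹ : ℂ) • y', ?_, ?_, ‖y'‖, ?_⟩
  · rw [norm_smul, norm_inv, Complex.norm_real, norm_norm, inv_mul_cancel₀ hy']
  · simp [y', inner_self_eq_norm_sq_to_K, hx]
  · rw [smul_smul, mul_inv_cancel₀ (by exact_mod_cast hy'), one_smul]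
    exact (add_sub_cancel _ _).symm

theorem le_of_combo_sq_le {r X Y Z a b : ℝ} (ha : 0 ≤ a) (hb : 0 ≤ b) (hab : a + b = 1)
    (hX : r ≤ X) (hY : r ≤ Y) (hZ : 0 ≤ Z) (h : a * X ^ 2 + b * Y ^ 2 ≤ Z ^ 2) : r ≤ Z := by
  rcases le_or_gt r 0 with hr | hr
  · exact hr.trans hZ
  · nlinarith [mul_le_mul_of_nonneg_left (pow_le_pow_left₀ hr.le hX 2) ha,
      mul_le_mul_of_nonneg_left (pow_le_pow_left₀ hr.le hY 2) hb]

theorem convex_projDWShell (S : E →ₗ[ℂ] E) (T : E →ₗ[ℂ] F) (r : ℝ) :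
    Convex ℝ (projDWShell S T r) := by
  rintro _ ⟨x, hx, hxr, rfl⟩ _ ⟨y, hy, hyr, rfl⟩ a b ha hb hab
  by_cases hxy : y = inner ℂ x y • x
  · generalize inner ℂ x y = c at hxy
    subst hxy
    have hc : ‖c‖ = 1 := by rwa [norm_smul, hx, mul_one] at hy
    have hcc : conj c * c = 1 := by rw [conj_mul', hc]; simp
    have : inner ℂ (c • x) (S (c • x)) = inner ℂ x (S x) := by
      rw [map_smul, inner_smul_left, inner_smul_right]
      linear_combination inner ℂ x (S x) * hcc
    rw [this, Convex.combo_self hab]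
    exact ⟨x, hx, hxr, rfl⟩
  obtain ⟨e, he, hxe, c, hyxe⟩ := exists_eq_inner_smul_add_smul hx hxy
  have hc : ‖inner ℂ x y‖ ^ 2 + ‖c‖ ^ 2 = 1 := by
    rw [← norm_smul_add_smul_sq hx he hxe, ← hyxe, hy, one_pow]
  obtain ⟨α, β, hαβ, hS, hT⟩ := exists_sesq_eq_combo_le ((innerₛₗ ℂ).compl₂ S)
    (((innerₛₗ ℂ).comp T).compl₂ T) x e hc ha hb hab
  rw [← hyxe] at hS hT
  refine ⟨α • x + β • e, ?_, ?_, hS.symm⟩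
  · rw [← pow_eq_one_iff_of_nonneg (norm_nonneg _) two_ne_zero,
      norm_smul_add_smul_sq hx he hxe, hαβ]
  · simp only [LinearMap.compl₂_apply, LinearMap.comp_apply, innerₛₗ_apply_apply] at hT
    have hre (v : F) : (inner ℂ v v).re = ‖v‖ ^ 2 := inner_self_eq_norm_sq (𝕜 := ℂ) v
    rw [hre, hre, hre] at hT
    exact le_of_combo_sq_le ha hb hab hxr hyr (norm_nonneg _) hT

theorem isCompact_projDWShell [FiniteDimensional ℂ E] (S : E →ₗ[ℂ] E) (T : E →ₗ[ℂ] F) (r : ℝ) :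
    IsCompact (projDWShell S T r) := by
  have hS := S.continuous_of_finiteDimensional
  have hT := T.continuous_of_finiteDimensional
  have : projDWShell S T r =
      (fun x => inner ℂ x (S x)) '' (Metric.sphere 0 1 ∩ {x | r ≤ ‖T x‖}) := by
    ext z; simp [projDWShell, eq_comm, and_assoc]
  rw [this]
  exact ((isCompact_sphere 0 1).inter_right (isClosed_le continuous_const hT.norm)).image
    (continuous_id.inner hS)

end InnerProductSpace

theorem wShell_isCompact_convex_general {n : ℕ}
    (A : Matrix (Fin n) (Fin n) ℂ) (r : ℝ) :
    IsCompact (wShell A r) ∧ Convex ℝ (wShell A r) :=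
  ⟨isCompact_projDWShell (Matrix.toEuclideanLin A) (Matrix.toEuclideanLin A) r,
    convex_projDWShell (Matrix.toEuclideanLin A) (Matrix.toEuclideanLin A) r⟩

/-- Paper's Proposition 1: the v-projected DW-shell is compact and convex. -/
theorem wShell_isCompact_convex {n : ℕ} (hn : 1 ≤ n)
    (A : Matrix (Fin n) (Fin n) ℂ) (r : ℝ) :
    IsCompact (wShell A r) ∧ Convex ℝ (wShell A r) :=
  wShell_isCompact_convex_general A r
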